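/- arXiv:1609.05780 — 6 statements merged into one kernel-verified Lean document; each statement's English description precedes it below -/
import Mathlib

section
/- Let A, B be unitary d×d matrices and let C = ABA⁻¹B⁻¹ be their group commutator. Then ‖C − I‖ ≤ √2 · ‖A − I‖ · ‖B − I‖, where ‖M‖ = √(tr(M M†)) is the Hilbert–Schmidt (Frobenius) norm. -/
open scoped Matrix
/-- The Hilbert–Schmidt (Frobenius) norm `‖M‖ = √(tr(M M†))`. -/
noncomputable def frobNorm {d : ℕ} (M : Matrix (Fin d) (Fin d) ℂ) : ℝ :=
  Real.sqrt ((M * Mᴴ).trace.re)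

/-!
For unitary `A` and `B` we have `C - 1 = (AB - BA) (A⁻¹ B⁻¹)`, and the Frobenius norm is unitarily
invariant, so it suffices to bound `AB - BA = (A - 1)(B - 1) - (B - 1)(A - 1)`. The matrix
`X = A - 1` is normal, hence unitarily diagonalisable, `X ~ diag λ`. In that basis the commutator
`XY - YX` has entries `(λᵢ - λⱼ) Yᵢⱼ`, and `|λᵢ - λⱼ|² ≤ 2 (|λᵢ|² + |λⱼ|²) ≤ 2 ‖X‖²`
(for `i = j` the entry vanishes), which gives `‖XY - YX‖ ≤ √2 ‖X‖ ‖Y‖`.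
-/

open scoped ComplexStarModule

namespace LinearMap.IsSymmetric

open Module.End

variable {𝕜 E : Type*} [RCLike 𝕜] [NormedAddCommGroup E] [InnerProductSpace 𝕜 E]
  [FiniteDimensional 𝕜 E]

theorem exists_orthonormalBasis_joint_eigenvectors {ι : Type*} [Fintype ι]
    (hι : Module.finrank 𝕜 E = Fintype.card ι) {P Q : E →ₗ[𝕜] E}
    (hP : P.IsSymmetric) (hQ : Q.IsSymmetric) (hPQ : Commute P Q) :
    ∃ (b : OrthonormalBasis ι 𝕜 E) (ν γ : ι → 𝕜),
      ∀ i, P (b i) = ν i • b i ∧ Q (b i) = γ i • b i := by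
  classical
  let V : 𝕜 × 𝕜 → Submodule 𝕜 E := fun c => eigenspace P c.2 ⊓ eigenspace Q c.1
  have hV : DirectSum.IsInternal V := directSum_isInternal_of_commute hP hQ hPQ
  have := ((DirectSum.isInternal_submodule_iff_iSupIndep_and_iSup_eq_top V).mp hV).1
    |>.fintypeNeBotOfFiniteDimensional
  have hV' : DirectSum.IsInternal fun c : {c // V c ≠ ⊥} => V c :=
    DirectSum.isInternal_ne_bot_iff.mpr hV
  have hOrth : OrthogonalFamily 𝕜 (fun c : {c // V c ≠ ⊥} => V c) fun c => (V c).subtypeₗᵢ :=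
    (orthogonalFamily_eigenspace_inf_eigenspace hP hQ).comp Subtype.coe_injective
  let e := Fintype.equivFinOfCardEq hι.symm
  refine ⟨(hV'.subordinateOrthonormalBasis rfl hOrth).reindex e.symm,
    fun i => (hV'.subordinateOrthonormalBasisIndex rfl (e i) hOrth).val.2,
    fun i => (hV'.subordinateOrthonormalBasisIndex rfl (e i) hOrth).val.1, fun i => ?_⟩
  obtain ⟨hmemP, hmemQ⟩ :=
    Submodule.mem_inf.mp (hV'.subordinateOrthonormalBasis_subordinate rfl (e i) hOrth)
  simpa using ⟨mem_eigenspace_iff.mp hmemP, mem_eigenspace_iff.mp hmemQ⟩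

end LinearMap.IsSymmetric

theorem ContinuousLinearMap.exists_orthonormalBasis_eigenvectors_of_isStarNormal
    {E : Type*} [NormedAddCommGroup E] [InnerProductSpace ℂ E] [FiniteDimensional ℂ E]
    {ι : Type*} [Fintype ι] (hι : Module.finrank ℂ E = Fintype.card ι)
    (T : E →L[ℂ] E) [IsStarNormal T] :
    ∃ (b : OrthonormalBasis ι ℂ E) (μ : ι → ℂ), ∀ i, T (b i) = μ i • b i := by
  obtain ⟨b, ν, γ, hb⟩ := LinearMap.IsSymmetric.exists_orthonormalBasis_joint_eigenvectors hι
    (ℜ T).2.isSymmetric (ℑ T).2.isSymmetric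
    ((Commute.realPart_imaginaryPart T).map ContinuousLinearMap.toLinearMapRingHom)
  refine ⟨b, fun i => ν i + Complex.I * γ i, fun i => ?_⟩
  obtain ⟨hν, hγ⟩ := hb i
  rw [ContinuousLinearMap.coe_coe] at hν hγ
  conv_lhs => rw [← realPart_add_I_smul_imaginaryPart T]
  rw [add_apply, smul_apply, hν, hγ, add_smul, mul_smul]

namespace Matrix

theorem exists_conjStarAlgAut_star_eq_diagonal_of_isStarNormal {n : Type*} [Fintype n]
    [DecidableEq n] (A : Matrix n n ℂ) [IsStarNormal A] :
    ∃ (U : unitaryGroup n ℂ) (μ : n → ℂ), Unitary.conjStarAlgAut ℂ _ (star U) A = diagonal μ := by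
  obtain ⟨b, μ, hb⟩ := (toEuclideanCLM (n := n) (𝕜 := ℂ) A)
    |>.exists_orthonormalBasis_eigenvectors_of_isStarNormal finrank_euclideanSpace
  let U := (EuclideanSpace.basisFun n ℂ).toBasis.toMatrix b.toBasis
  have hU : U ∈ unitaryGroup n ℂ :=
    (EuclideanSpace.basisFun n ℂ).toMatrix_orthonormalBasis_mem_unitary b
  have hUcol : ∀ j, U *ᵥ Pi.single j 1 = b j := fun j => by
    simp_rw [mulVec_single_one]; rfl
  refine ⟨⟨U, hU⟩, μ, ?_⟩
  rw [Unitary.conjStarAlgAut_star_apply]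
  apply toEuclideanLin.injective <| (EuclideanSpace.basisFun n ℂ).toBasis.ext fun j ↦ ?_
  have hAb : A *ᵥ b j = μ j • b j := congr(WithLp.ofLp $(hb j))
  have hUb : star U *ᵥ b j = Pi.single j 1 := by
    rw [← hUcol, mulVec_mulVec, hU.1, one_mulVec]
  simp only [toLpLin_apply, OrthonormalBasis.coe_toBasis, EuclideanSpace.basisFun_apply,
    PiLp.ofLp_single, ← mulVec_mulVec, hUcol, hAb, mulVec_smul, hUb, diagonal_mulVec_single,
    mul_one]
  ext k
  simp [Pi.single_apply]

end Matrix

theorem norm_sub_sq_le_two_mul_sum {ι E : Type*} [Fintype ι] [SeminormedAddCommGroup E]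
    (f : ι → E) (i j : ι) : ‖f i - f j‖ ^ 2 ≤ 2 * ∑ k, ‖f k‖ ^ 2 := by
  classical
  rcases eq_or_ne i j with rfl | hij
  · rw [sub_self, norm_zero, zero_pow two_ne_zero]
    positivity
  have hpair : ‖f i‖ ^ 2 + ‖f j‖ ^ 2 ≤ ∑ k, ‖f k‖ ^ 2 :=
    calc ‖f i‖ ^ 2 + ‖f j‖ ^ 2 = ∑ k ∈ {i, j}, ‖f k‖ ^ 2 := by rw [Finset.sum_pair hij]
      _ ≤ ∑ k, ‖f k‖ ^ 2 := Finset.sum_le_univ_sum_of_nonneg fun k => by positivity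
  nlinarith [norm_sub_le (f i) (f j), norm_nonneg (f i - f j), sq_nonneg (‖f i‖ - ‖f j‖)]

section frobNorm

open Matrix

variable {d : ℕ}

theorem frobNorm_nonneg (M : Matrix (Fin d) (Fin d) ℂ) : 0 ≤ frobNorm M :=
  Real.sqrt_nonneg _

theorem frobNorm_sq (M : Matrix (Fin d) (Fin d) ℂ) :
    frobNorm M ^ 2 = ∑ i, ∑ j, ‖M i j‖ ^ 2 := by
  have htrace : (M * Mᴴ).trace = ∑ i, ∑ j, ((‖M i j‖ ^ 2 : ℝ) : ℂ) := by
    simp [trace, mul_apply, Complex.mul_conj']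
  have hre : (M * Mᴴ).trace.re = ∑ i, ∑ j, ‖M i j‖ ^ 2 := by
    simp only [htrace, Complex.re_sum, Complex.ofReal_re]
  rw [frobNorm, hre, Real.sq_sqrt (by positivity)]

theorem frobNorm_mul_unitary (M : Matrix (Fin d) (Fin d) ℂ) {U : Matrix (Fin d) (Fin d) ℂ}
    (hU : U ∈ unitaryGroup (Fin d) ℂ) : frobNorm (M * U) = frobNorm M := by
  rw [frobNorm, conjTranspose_mul, Matrix.mul_assoc, ← Matrix.mul_assoc U,
    ← star_eq_conjTranspose U, Unitary.mul_star_self_of_mem hU, Matrix.one_mul, frobNorm]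

theorem frobNorm_unitary_mul {U : Matrix (Fin d) (Fin d) ℂ} (hU : U ∈ unitaryGroup (Fin d) ℂ)
    (M : Matrix (Fin d) (Fin d) ℂ) : frobNorm (U * M) = frobNorm M := by
  rw [frobNorm, conjTranspose_mul, trace_mul_comm, Matrix.mul_assoc, ← Matrix.mul_assoc Uᴴ,
    ← star_eq_conjTranspose U, Unitary.star_mul_self_of_mem hU, Matrix.one_mul, trace_mul_comm,
    frobNorm]

theorem frobNorm_conjStarAlgAut (U : unitaryGroup (Fin d) ℂ) (M : Matrix (Fin d) (Fin d) ℂ) :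
    frobNorm (Unitary.conjStarAlgAut ℂ _ U M) = frobNorm M := by
  rw [Unitary.conjStarAlgAut_apply, frobNorm_mul_unitary _ (Unitary.star_mem U.2),
    frobNorm_unitary_mul U.2]

theorem frobNorm_diagonal_mul_sub_mul_le (μ : Fin d → ℂ) (W : Matrix (Fin d) (Fin d) ℂ) :
    frobNorm (diagonal μ * W - W * diagonal μ) ≤
      Real.sqrt 2 * frobNorm (diagonal μ) * frobNorm W := by
  have hentry : ∀ i j, (diagonal μ * W - W * diagonal μ) i j = (μ i - μ j) * W i j := by
    intro i j
    simp only [Matrix.sub_apply, diagonal_mul, mul_diagonal]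
    ring
  have hdiag : frobNorm (diagonal μ) ^ 2 = ∑ k, ‖μ k‖ ^ 2 := by
    simp [frobNorm_sq, diagonal_apply, apply_ite]
  have hnonneg : 0 ≤ Real.sqrt 2 * frobNorm (diagonal μ) * frobNorm W := by
    have := frobNorm_nonneg (diagonal μ); have := frobNorm_nonneg W; positivity
  refine le_of_pow_le_pow_left₀ two_ne_zero hnonneg ?_
  rw [mul_pow, mul_pow, Real.sq_sqrt zero_le_two, hdiag, frobNorm_sq, frobNorm_sq, Finset.mul_sum]
  refine Finset.sum_le_sum fun i _ => ?_
  rw [Finset.mul_sum]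
  refine Finset.sum_le_sum fun j _ => ?_
  rw [hentry, norm_mul, mul_pow]
  exact mul_le_mul_of_nonneg_right (norm_sub_sq_le_two_mul_sum μ i j) (by positivity)

theorem frobNorm_mul_sub_mul_le_of_isStarNormal (X Y : Matrix (Fin d) (Fin d) ℂ)
    [IsStarNormal X] : frobNorm (X * Y - Y * X) ≤ Real.sqrt 2 * frobNorm X * frobNorm Y := by
  obtain ⟨U, μ, hX⟩ := X.exists_conjStarAlgAut_star_eq_diagonal_of_isStarNormal
  have := frobNorm_diagonal_mul_sub_mul_le μ (Unitary.conjStarAlgAut ℂ _ (star U) Y)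
  rwa [← hX, ← map_mul, ← map_mul, ← map_sub, frobNorm_conjStarAlgAut, frobNorm_conjStarAlgAut,
    frobNorm_conjStarAlgAut] at this

end frobNorm

/-- For unitary `A, B` with group commutator `C = A B A⁻¹ B⁻¹`, we have
`‖C − I‖ ≤ √2 ‖A − I‖ ‖B − I‖` in Frobenius norm. -/
theorem frobNorm_commutator_le {d : ℕ}
    (A B : Matrix (Fin d) (Fin d) ℂ)
    (hA : A ∈ Matrix.unitaryGroup (Fin d) ℂ)
    (hB : B ∈ Matrix.unitaryGroup (Fin d) ℂ)
    (C : Matrix (Fin d) (Fin d) ℂ) (hC : C = A * B * A⁻¹ * B⁻¹) :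
    frobNorm (C - 1) ≤ Real.sqrt 2 * frobNorm (A - 1) * frobNorm (B - 1) := by
  have hAinv : A⁻¹ = star A := Matrix.inv_eq_left_inv (Unitary.star_mul_self_of_mem hA)
  have hBinv : B⁻¹ = star B := Matrix.inv_eq_left_inv (Unitary.star_mul_self_of_mem hB)
  have hC_sub_one : C - 1 = (A * B - B * A) * (star A * star B) := by
    rw [hC, hAinv, hBinv, Matrix.sub_mul, Matrix.mul_assoc, Matrix.mul_assoc B,
      ← Matrix.mul_assoc A (star A), Unitary.mul_star_self_of_mem hA, Matrix.one_mul,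
      Unitary.mul_star_self_of_mem hB]
  have hcomm : A * B - B * A = (A - 1) * (B - 1) - (B - 1) * (A - 1) := by noncomm_ring
  have : IsStarNormal A := isStarNormal_of_mem_unitary hA
  have : IsStarNormal (A - 1) := by rw [← neg_sub]; infer_instance
  rw [hC_sub_one, frobNorm_mul_unitary _ (mul_mem (Unitary.star_mem hA) (Unitary.star_mem hB)),
    hcomm]
  exact frobNorm_mul_sub_mul_le_of_isStarNormal _ _
end

section
/- Let G = SU(d) (as unitary matrices with determinant 1) and let g, h ∈ G satisfy ‖g − I‖ < 1/√2 and ‖h − I‖ < 1/√2 in Frobenius norm, with gh ≠ hg. Then the subgroup generated by g and h is infinite. -/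
open scoped Matrix

/-!
Iterating `x ↦ ⁅g, x⁆` from `h` contracts the Frobenius distance to `1` by the factor
`√2 ‖g - 1‖ < 1`: after a unitary change of basis `g` is diagonal, and the `(i, j)` entry of
`g x - x g` is `(gᵢ - gⱼ) xᵢⱼ` with `|gᵢ - gⱼ|² ≤ 2 ‖g - 1‖²`. If `⟨g, h⟩` were finite the iterates
would reach `1`, so some iterate `c` (still within `‖h - 1‖ < 1` of `1`) has `z = ⁅g, c⁆ ≠ 1`
commuting with `g`. Then every `zⁱ c = gⁱ c g⁻ⁱ` lies at distance `‖c - 1‖` from `1`, so the average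
of the `zⁱ c` over the cyclic group generated by `z` is within `‖c - 1‖ < 1` of `1`. But this
average is singular, because `∑ zⁱ` is annihilated by `z - 1 ≠ 0`, and a singular matrix is at
distance at least `1` from `1`.
-/

open scoped commutatorElement

attribute [local instance] Matrix.frobeniusSeminormedAddCommGroup
  Matrix.frobeniusNormedAddCommGroup Matrix.frobeniusNormedSpace

theorem conj_pow_eq_commutatorElement_pow_mul {G : Type*} [Group G] {g c : G}
    (hcomm : Commute g ⁅g, c⁆) (i : ℕ) : g ^ i * c * (g ^ i)⁻¹ = ⁅g, c⁆ ^ i * c := by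
  induction i with
  | zero => simp
  | succ i ih =>
    have hc : g * c * g⁻¹ = ⁅g, c⁆ * c := by rw [commutatorElement_def]; group
    calc g ^ (i + 1) * c * (g ^ (i + 1))⁻¹ = g * (g ^ i * c * (g ^ i)⁻¹) * g⁻¹ := by group
      _ = g * ⁅g, c⁆ ^ i * g⁻¹ * (g * c * g⁻¹) := by rw [ih]; group
      _ = ⁅g, c⁆ ^ i * (⁅g, c⁆ * c) := by rw [(hcomm.pow_right i).eq, hc]; group
      _ = ⁅g, c⁆ ^ (i + 1) * c := by rw [pow_succ, mul_assoc]

section IterateCommutator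

variable {G : Type*} [Group G] (g h : G)

def iterateCommutator (k : ℕ) : G := (⁅g, ·⁆)^[k] h

theorem iterateCommutator_zero : iterateCommutator g h 0 = h := rfl

theorem iterateCommutator_succ (k : ℕ) :
    iterateCommutator g h (k + 1) = ⁅g, iterateCommutator g h k⁆ :=
  Function.iterate_succ_apply' _ k h

theorem iterateCommutator_mem_closure (k : ℕ) :
    iterateCommutator g h k ∈ Subgroup.closure {g, h} := by
  have hg : g ∈ Subgroup.closure {g, h} := Subgroup.subset_closure (Or.inl rfl)
  induction k with
  | zero => exact Subgroup.subset_closure (Or.inr rfl)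
  | succ k ih =>
    rw [iterateCommutator_succ, commutatorElement_def]
    exact mul_mem (mul_mem (mul_mem hg ih) (inv_mem hg)) (inv_mem ih)

variable {g h}

theorem exists_commute_commutatorElement_of_contracting [Finite (Subgroup.closure {g, h})]
    (f : G → ℝ) (hf₀ : ∀ y, 0 ≤ f y) (hf : ∀ y, y ≠ 1 → 0 < f y) {q : ℝ} (hq : q < 1)
    (hcontr : ∀ y, f ⁅g, y⁆ ≤ q * f y) (hne : ⁅g, h⁆ ≠ 1) :
    ∃ c, f c ≤ f h ∧ Commute g ⁅g, c⁆ ∧ IsOfFinOrder ⁅g, c⁆ ∧ ⁅g, c⁆ ≠ 1 := by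
  set x := iterateCommutator g h
  have hx : ∀ k, x (k + 1) = ⁅g, x k⁆ := iterateCommutator_succ g h
  have hfin : (Subgroup.closure {g, h} : Set G).Finite := Set.toFinite _
  obtain ⟨k, hk⟩ : ∃ k, x k = 1 := by
    by_contra! hx₁
    have hanti : StrictAnti (f ∘ x) := strictAnti_nat_of_succ_lt fun k => by
      simpa only [Function.comp_apply, hx] using
        (hcontr _).trans_lt (mul_lt_of_lt_one_left (hf _ (hx₁ k)) hq)
    exact Set.infinite_range_of_injective hanti.injective.of_comp
      (hfin.subset (Set.range_subset_iff.mpr (iterateCommutator_mem_closure g h)))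
  obtain ⟨k, hk₁, hk₂⟩ := Nat.exists_not_and_succ_of_not_zero_of_exists
    (p := fun k => x (k + 1) = 1) (by rwa [hx]) ⟨k, by rw [hx, hk, commutatorElement_one_right]⟩
  simp only [hx] at hk₁ hk₂
  refine ⟨x k, ?_, commutatorElement_eq_one_iff_commute.mp hk₂, ?_, hk₁⟩
  · have hanti : Antitone (f ∘ x) := antitone_nat_of_succ_le fun j => by
      simpa only [Function.comp_apply, hx] using
        (hcontr _).trans (mul_le_of_le_one_left (hf₀ _) hq.le)
    simpa only [Function.comp_apply, x, iterateCommutator_zero] using hanti (Nat.zero_le k)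
  · have hmem : ⁅g, x k⁆ ∈ Subgroup.closure {g, h} := hx k ▸ iterateCommutator_mem_closure g h _
    exact finite_powers.mp (hfin.subset fun _ ⟨i, hi⟩ => hi ▸ pow_mem hmem i)

end IterateCommutator

theorem norm_sub_sq_le_two_mul_sum_norm_sq {ι E : Type*} [Fintype ι] [DecidableEq ι]
    [SeminormedAddCommGroup E] {x : ι → E} {i j : ι} (hij : i ≠ j) :
    ‖x i - x j‖ ^ 2 ≤ 2 * ∑ k, ‖x k‖ ^ 2 :=
  calc ‖x i - x j‖ ^ 2 ≤ 2 * (‖x i‖ ^ 2 + ‖x j‖ ^ 2) := by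
        nlinarith [norm_sub_le (x i) (x j), norm_nonneg (x i - x j), sq_nonneg (‖x i‖ - ‖x j‖)]
    _ = 2 * ∑ k ∈ {i, j}, ‖x k‖ ^ 2 := by rw [Finset.sum_pair hij]
    _ ≤ 2 * ∑ k, ‖x k‖ ^ 2 := by gcongr; exact Finset.subset_univ _

namespace Matrix

theorem frobenius_norm_sq {m n α : Type*} [Fintype m] [Fintype n] [SeminormedAddCommGroup α]
    (A : Matrix m n α) : ‖A‖ ^ 2 = ∑ i, ∑ j, ‖A i j‖ ^ 2 := by
  rw [frobenius_norm_def, ← Real.rpow_natCast, ← Real.rpow_mul (by positivity)]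
  norm_num

theorem det_geom_sum_eq_zero {n K : Type*} [Fintype n] [DecidableEq n] [Field K]
    {z : Matrix n n K} {m : ℕ} (hm : z ^ m = 1) (hz : z ≠ 1) :
    (∑ i ∈ Finset.range m, z ^ i).det = 0 := by
  by_contra h
  have hu : IsUnit (∑ i ∈ Finset.range m, z ^ i) :=
    (isUnit_iff_isUnit_det _).mpr (isUnit_iff_ne_zero.mpr h)
  exact hz (sub_eq_zero.mp (hu.mul_right_eq_zero.mp (by rw [geom_sum_mul, hm, sub_self])))

variable {n : Type*} [Fintype n]

theorem re_trace_mul_conjTranspose (A : Matrix n n ℂ) : (A * Aᴴ).trace.re = ‖A‖ ^ 2 := by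
  simp only [frobenius_norm_sq, trace, diag, mul_apply, conjTranspose_apply, Complex.re_sum,
    Complex.star_def, Complex.mul_conj, Complex.ofReal_re, Complex.normSq_eq_norm_sq]

variable [DecidableEq n]

theorem frobenius_norm_mul_unitary (A : Matrix n n ℂ) (U : unitaryGroup n ℂ) :
    ‖A * U‖ = ‖A‖ := by
  rw [← sq_eq_sq₀ (norm_nonneg _) (norm_nonneg _), ← re_trace_mul_conjTranspose,
    ← re_trace_mul_conjTranspose, conjTranspose_mul, ← star_eq_conjTranspose (U : Matrix n n ℂ),
    Matrix.mul_assoc, ← Matrix.mul_assoc (U : Matrix n n ℂ), Unitary.mul_star_self_of_mem U.2,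
    Matrix.one_mul]

theorem frobenius_norm_unitary_mul (U : unitaryGroup n ℂ) (A : Matrix n n ℂ) :
    ‖(U : Matrix n n ℂ) * A‖ = ‖A‖ := by
  rw [← frobenius_norm_conjTranspose, conjTranspose_mul,
    ← star_eq_conjTranspose (U : Matrix n n ℂ), ← Unitary.coe_star, frobenius_norm_mul_unitary,
    frobenius_norm_conjTranspose]

theorem frobenius_norm_conjStarAlgAut (U : unitaryGroup n ℂ) (A : Matrix n n ℂ) :
    ‖Unitary.conjStarAlgAut ℂ _ U A‖ = ‖A‖ := by
  rw [Unitary.conjStarAlgAut_apply, ← Unitary.coe_star, frobenius_norm_mul_unitary,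
    frobenius_norm_unitary_mul]

theorem norm_le_frobenius_norm_smul_one_sub {X : Matrix n n ℂ} (hX : X.det = 0) (c : ℂ) :
    ‖c‖ ≤ ‖c • 1 - X‖ := by
  obtain ⟨v, hv, hXv⟩ := exists_mulVec_eq_zero_iff.mpr hX
  set V := replicateCol Unit v with hVv
  have hV : 0 < ‖V‖ := norm_pos_iff.mpr (by simpa [V] using hv)
  have hXV : (c • 1 - X) * V = c • V := by
    rw [Matrix.sub_mul, Matrix.smul_mul, Matrix.one_mul, hVv, ← replicateCol_mulVec, hXv,
      replicateCol_zero, sub_zero]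
  refine le_of_mul_le_mul_right ?_ hV
  calc ‖c‖ * ‖V‖ = ‖(c • 1 - X) * V‖ := by rw [hXV, norm_smul]
    _ ≤ ‖c • 1 - X‖ * ‖V‖ := frobenius_norm_mul _ _

theorem isUnit_det_one_add_of_frobenius_norm_sub_one_lt {A : Matrix n n ℂ} (hA : ‖A - 1‖ < 2) :
    IsUnit (1 + A).det := by
  refine isUnit_iff_ne_zero.mpr fun h => hA.not_ge ?_
  have h2 := norm_le_frobenius_norm_smul_one_sub h 2
  rwa [show (2 : ℂ) • (1 : Matrix n n ℂ) - (1 + A) = -(A - 1) by module, norm_neg,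
    Complex.norm_two] at h2

/-- The Cayley transform. `A` is a rational function of it, so a unitary diagonalisation of the
Hermitian matrix `cayley A` diagonalises `A`. -/
noncomputable def cayley (A : Matrix n n ℂ) : Matrix n n ℂ := Complex.I • (1 - A) * (1 + A)⁻¹

theorem cayley_mul_one_add {A : Matrix n n ℂ} (h : IsUnit (1 + A).det) :
    cayley A * (1 + A) = Complex.I • (1 - A) := by
  rw [cayley, Matrix.mul_assoc, nonsing_inv_mul _ h, Matrix.mul_one]

theorem isHermitian_cayley {A : Matrix n n ℂ} (hA : A ∈ unitaryGroup n ℂ)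
    (h : IsUnit (1 + A).det) : (cayley A).IsHermitian := by
  -- conjugating by the invertible `P = 1 + A` turns `cayley A` into `i (Aᴴ - A)`
  set P := 1 + A
  have hP : IsUnit P := (isUnit_iff_isUnit_det P).mpr h
  have hPBP : Pᴴ * cayley A * P = Complex.I • (Aᴴ - A) := by
    have hAA : Aᴴ * A = 1 := Unitary.star_mul_self_of_mem hA
    rw [Matrix.mul_assoc, cayley_mul_one_add h, mul_smul_comm]
    simp only [P, conjTranspose_add, conjTranspose_one, Matrix.add_mul, Matrix.mul_sub, hAA,
      Matrix.mul_one, Matrix.one_mul]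
    congr 1; abel
  have hself : Pᴴ * (cayley A)ᴴ * P = Pᴴ * cayley A * P := by
    have := congrArg conjTranspose hPBP
    rw [conjTranspose_mul, conjTranspose_mul, conjTranspose_conjTranspose,
      ← Matrix.mul_assoc] at this
    rw [this, hPBP, conjTranspose_smul, conjTranspose_sub, conjTranspose_conjTranspose,
      Complex.star_def, Complex.conj_I, neg_smul, ← smul_neg, neg_sub]
  exact hP.mul_right_cancel
    (hP.star.mul_left_cancel (by simpa only [Matrix.mul_assoc, star_eq_conjTranspose] using hself))

theorem exists_isDiag_conjStarAlgAut {A : Matrix n n ℂ} (hA : A ∈ unitaryGroup n ℂ)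
    (h : ‖A - 1‖ < 2) : ∃ U : unitaryGroup n ℂ, (Unitary.conjStarAlgAut ℂ _ U A).IsDiag := by
  have h1A := isUnit_det_one_add_of_frobenius_norm_sub_one_lt h
  have hB := isHermitian_cayley hA h1A
  refine ⟨star hB.eigenvectorUnitary, fun j k hjk => ?_⟩
  have hconj := congrArg (Unitary.conjStarAlgAut ℂ _ (star hB.eigenvectorUnitary))
    (cayley_mul_one_add h1A)
  rw [map_mul, hB.conjStarAlgAut_star_eigenvectorUnitary, map_smul, map_add, map_sub,
    map_one] at hconj
  -- with `D = diag λ` and `A'` the conjugated `A`, entry `(j, k)` of `D (1 + A') = i (1 - A')`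
  -- says `(λⱼ + i) A'ⱼₖ = 0`
  have hjk' := congrFun (congrFun hconj j) k
  simp only [diagonal_mul, Matrix.add_apply, Matrix.sub_apply, Matrix.smul_apply,
    one_apply_ne hjk, zero_add, zero_sub, smul_eq_mul, Function.comp_apply] at hjk'
  have hne : (hB.eigenvalues j : ℂ) + Complex.I ≠ 0 := fun h0 => by
    simpa using congrArg Complex.im h0
  exact (mul_eq_zero.mp (by linear_combination hjk')).resolve_left hne

theorem frobenius_norm_diagonal_mul_sub_mul_diagonal_le (w : n → ℂ) (Y : Matrix n n ℂ) :
    ‖diagonal w * Y - Y * diagonal w‖ ≤ √2 * ‖diagonal w - 1‖ * ‖Y‖ := by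
  have hw : ‖diagonal w - 1‖ ^ 2 = ∑ k, ‖w k - 1‖ ^ 2 := by
    rw [← diagonal_one, diagonal_sub, frobenius_norm_sq]
    simp [diagonal_apply, apply_ite]
  have hentry : ∀ i j, ‖w i - w j‖ ^ 2 ≤ 2 * ‖diagonal w - 1‖ ^ 2 := by
    intro i j
    rcases eq_or_ne i j with rfl | hij
    · rw [sub_self, norm_zero, zero_pow two_ne_zero]; positivity
    · rw [hw, ← sub_sub_sub_cancel_right (w i) (w j) 1]
      exact norm_sub_sq_le_two_mul_sum_norm_sq (E := ℂ) (x := fun k => w k - 1) hij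
  refine le_of_pow_le_pow_left₀ two_ne_zero (by positivity) ?_
  calc ‖diagonal w * Y - Y * diagonal w‖ ^ 2 = ∑ i, ∑ j, ‖w i - w j‖ ^ 2 * ‖Y i j‖ ^ 2 := by
        rw [frobenius_norm_sq]
        refine Finset.sum_congr rfl fun i _ => Finset.sum_congr rfl fun j _ => ?_
        rw [sub_apply, diagonal_mul, mul_diagonal, mul_comm (Y i j), ← sub_mul, norm_mul, mul_pow]
    _ ≤ ∑ i, ∑ j, 2 * ‖diagonal w - 1‖ ^ 2 * ‖Y i j‖ ^ 2 := by
        gcongr with i _ j _; exact hentry i j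
    _ = (√2 * ‖diagonal w - 1‖ * ‖Y‖) ^ 2 := by
        simp only [mul_pow, Real.sq_sqrt zero_le_two, frobenius_norm_sq Y, Finset.mul_sum]

theorem frobenius_norm_mul_sub_mul_le {A : Matrix n n ℂ} (hA : A ∈ unitaryGroup n ℂ)
    (h : ‖A - 1‖ < 2) (Y : Matrix n n ℂ) : ‖A * Y - Y * A‖ ≤ √2 * ‖A - 1‖ * ‖Y‖ := by
  obtain ⟨U, hU⟩ := exists_isDiag_conjStarAlgAut hA h
  set φ := Unitary.conjStarAlgAut ℂ (Matrix n n ℂ) U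
  have hφ := frobenius_norm_diagonal_mul_sub_mul_diagonal_le (φ A).diag (φ Y)
  rwa [hU.diagonal_diag, ← map_mul, ← map_mul, ← map_sub, ← map_one φ, ← map_sub,
    frobenius_norm_conjStarAlgAut, frobenius_norm_conjStarAlgAut,
    frobenius_norm_conjStarAlgAut] at hφ

theorem frobenius_norm_commutatorElement_sub_one_le {a : unitaryGroup n ℂ}
    (ha : ‖(a : Matrix n n ℂ) - 1‖ < 2) (b : unitaryGroup n ℂ) :
    ‖((⁅a, b⁆ : unitaryGroup n ℂ) : Matrix n n ℂ) - 1‖ ≤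
      √2 * ‖(a : Matrix n n ℂ) - 1‖ * ‖(b : Matrix n n ℂ) - 1‖ := by
  have hcomm : ((⁅a, b⁆ : unitaryGroup n ℂ) : Matrix n n ℂ) - 1 =
      (a * (b - 1) - (b - 1) * a) * ((a⁻¹ * b⁻¹ : unitaryGroup n ℂ) : Matrix n n ℂ) := by
    have ha' : (a : Matrix n n ℂ) * (a⁻¹ : unitaryGroup n ℂ) = 1 := by simp
    have hb' : (b : Matrix n n ℂ) * (b⁻¹ : unitaryGroup n ℂ) = 1 := by simp
    simp only [commutatorElement_def, Submonoid.coe_mul]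
    generalize (a : Matrix n n ℂ) = x, (b : Matrix n n ℂ) = y,
      ((a⁻¹ : unitaryGroup n ℂ) : Matrix n n ℂ) = x',
      ((b⁻¹ : unitaryGroup n ℂ) : Matrix n n ℂ) = y' at ha' hb' ⊢
    calc x * y * x' * y' - 1 = x * y * x' * y' - y * (x * x') * y' := by
          rw [ha', Matrix.mul_one, hb']
      _ = _ := by noncomm_ring
  rw [hcomm, frobenius_norm_mul_unitary]
  exact frobenius_norm_mul_sub_mul_le a.2 ha _

theorem one_le_frobenius_norm_sub_one_of_commute_commutatorElement {g c : unitaryGroup n ℂ}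
    (hcomm : Commute g ⁅g, c⁆) (hfin : IsOfFinOrder ⁅g, c⁆) (hne : ⁅g, c⁆ ≠ 1) :
    1 ≤ ‖(c : Matrix n n ℂ) - 1‖ := by
  set z := ⁅g, c⁆
  set m := orderOf z
  set S := ∑ i ∈ Finset.range m, (z : Matrix n n ℂ) ^ i
  have hS : S.det = 0 := by
    refine det_geom_sum_eq_zero ?_ fun h => hne (Subtype.ext h)
    rw [← SubmonoidClass.coe_pow, pow_orderOf_eq_one, OneMemClass.coe_one]
  have hterm : ∀ i, ‖1 - (z : Matrix n n ℂ) ^ i * c‖ = ‖(c : Matrix n n ℂ) - 1‖ := by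
    intro i
    have hconj : (z : Matrix n n ℂ) ^ i * c = Unitary.conjStarAlgAut ℂ _ (g ^ i) c := by
      rw [Unitary.conjStarAlgAut_apply, ← Unitary.coe_star, Unitary.star_eq_inv,
        ← SubmonoidClass.coe_pow, ← Submonoid.coe_mul,
        ← conj_pow_eq_commutatorElement_pow_mul hcomm]
      rfl
    rw [hconj, ← frobenius_norm_conjStarAlgAut (g ^ i) ((c : Matrix n n ℂ) - 1), map_sub,
      map_one, norm_sub_rev]
  have hsum : (m : ℂ) • 1 - S * c = ∑ i ∈ Finset.range m, (1 - (z : Matrix n n ℂ) ^ i * c) := by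
    simp [S, Finset.sum_sub_distrib, Finset.sum_mul, Nat.cast_smul_eq_nsmul]
  have hm : (m : ℝ) ≤ m * ‖(c : Matrix n n ℂ) - 1‖ :=
    calc (m : ℝ) = ‖(m : ℂ)‖ := by simp
      _ ≤ ‖(m : ℂ) • 1 - S * c‖ :=
        norm_le_frobenius_norm_smul_one_sub (by rw [det_mul, hS, zero_mul]) _
      _ ≤ ∑ i ∈ Finset.range m, ‖1 - (z : Matrix n n ℂ) ^ i * c‖ := by
        rw [hsum]; exact norm_sum_le _ _
      _ = m * ‖(c : Matrix n n ℂ) - 1‖ := by simp [hterm]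
  exact le_of_mul_le_mul_left (by simpa using hm) (by exact_mod_cast hfin.orderOf_pos)

end Matrix

theorem frobNorm_eq_norm {d : ℕ} (M : Matrix (Fin d) (Fin d) ℂ) : frobNorm M = ‖M‖ := by
  rw [frobNorm, Matrix.re_trace_mul_conjTranspose, Real.sqrt_sq (norm_nonneg _)]

theorem infinite_subgroup_of_close_to_identity_general {d : ℕ}
    (g h : Matrix.unitaryGroup (Fin d) ℂ)
    (hg : frobNorm ((g : Matrix (Fin d) (Fin d) ℂ) - 1) < 1 / Real.sqrt 2)
    (hh : frobNorm ((h : Matrix (Fin d) (Fin d) ℂ) - 1) < 1 / Real.sqrt 2)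
    (hne : g * h ≠ h * g) :
    Infinite (Subgroup.closure ({g, h} : Set (Matrix.unitaryGroup (Fin d) ℂ))) := by
  rw [frobNorm_eq_norm] at hg hh
  have hsqrt : 1 / √2 < 1 := by rw [div_lt_one (by positivity)]; exact Real.one_lt_sqrt_two
  have hq : √2 * ‖(g : Matrix (Fin d) (Fin d) ℂ) - 1‖ < 1 := by
    rwa [lt_div_iff₀' (by positivity)] at hg
  by_contra hH
  rw [not_infinite_iff_finite] at hH
  obtain ⟨c, hch, hcomm, hfin, hc⟩ :=
    exists_commute_commutatorElement_of_contracting (g := g) (h := h)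
    (fun y => ‖(y : Matrix (Fin d) (Fin d) ℂ) - 1‖) (fun _ => norm_nonneg _)
    (fun y hy => norm_pos_iff.mpr (sub_ne_zero.mpr fun h1 => hy (Subtype.ext h1))) hq
    (Matrix.frobenius_norm_commutatorElement_sub_one_le (by linarith))
    (fun h1 => hne (commutatorElement_eq_one_iff_commute.mp h1).eq)
  have hfar := Matrix.one_le_frobenius_norm_sub_one_of_commute_commutatorElement hcomm hfin hc
  linarith

/-- If `g, h ∈ SU(d)` satisfy `‖g − I‖ < 1/√2`, `‖h − I‖ < 1/√2` and `g h ≠ h g`,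
then the subgroup generated by `g` and `h` is infinite. -/
theorem infinite_subgroup_of_close_to_identity {d : ℕ}
    (g h : Matrix.unitaryGroup (Fin d) ℂ)
    (hgdet : (g : Matrix (Fin d) (Fin d) ℂ).det = 1)
    (hhdet : (h : Matrix (Fin d) (Fin d) ℂ).det = 1)
    (hg : frobNorm ((g : Matrix (Fin d) (Fin d) ℂ) - 1) < 1 / Real.sqrt 2)
    (hh : frobNorm ((h : Matrix (Fin d) (Fin d) ℂ) - 1) < 1 / Real.sqrt 2)
    (hne : g * h ≠ h * g) :
    Infinite (Subgroup.closure ({g, h} : Set (Matrix.unitaryGroup (Fin d) ℂ))) :=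
  infinite_subgroup_of_close_to_identity_general g h hg hh hne
end

section
/- Fix integers m ≥ 1 and d ≥ 1, and let L_{m,d} ⊂ ℝ^m be the lattice of points (q₁ + k/d, …, q_m + k/d) with q₁,…,q_m ∈ ℤ and k ∈ {0,…,d−1}. Then for any a ∈ ℝ^m and any ε with 0 < ε < 1/(2d), there exist an integer n with 1 ≤ n ≤ ⌈1/(d ε^m)⌉ and a point p ∈ L_{m,d} such that |n·aᵢ − pᵢ| < ε for all i = 1,…,m. -/
/-- The lattice `L_{m,d} ⊂ ℝ^m` of points `(q₁ + k/d, …, q_m + k/d)` with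
`qᵢ ∈ ℤ` and `k ∈ {0,…,d−1}`. -/
def latticeLmd (m d : ℕ) : Set (Fin m → ℝ) :=
  {x | ∃ (q : Fin m → ℤ) (k : ℕ), k < d ∧ ∀ i, x i = (q i : ℝ) + (k : ℝ) / d}

/-!
Blichfeldt's principle for a family of sets: if the sets `tᵢ` have total measure larger than a
fundamental domain of a lattice `Λ`, then two distinct translates `γ₁ + tᵢ`, `γ₂ + tⱼ` meet.
Apply it to `Λ = ℤ^m` and the `(N + 1) d` open cubes of side `ε` centred at `n a + (k / d) 𝟙`
(`0 ≤ n ≤ N`, `0 ≤ k < d`), whose total volume `(N + 1) d εᵐ` exceeds `1`. Two meeting cubes give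
`‖(n₁ - n₂) a - p‖ < ε` with `p = q + ((k₂ - k₁) / d) 𝟙 ∈ L_{m,d}`. If `n₁ = n₂`, then `p` is a
point of `L_{m,d}` of sup norm `< ε < 1 / d`, which forces `p = 0` and the two cubes to coincide.
-/

open MeasureTheory Metric Set Submodule
open scoped Pointwise

theorem MeasureTheory.IsAddFundamentalDomain.exists_ne_not_disjoint_vadd_of_measure_lt_tsum
    {E L ι : Type*} [MeasurableSpace E] {μ : Measure E} {F : Set E} [AddGroup L] [Countable L]
    [AddAction L E] [MeasurableSpace L] [MeasurableVAdd L E] [VAddInvariantMeasure L E μ]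
    [Countable ι] (fund : IsAddFundamentalDomain L F μ) {t : ι → Set E}
    (ht : ∀ i, NullMeasurableSet (t i) μ) (h : μ F < ∑' i, μ (t i)) :
    ∃ p q : ι × L, p ≠ q ∧ ¬Disjoint (p.2 +ᵥ t p.1) (q.2 +ᵥ t q.1) := by
  contrapose! h
  calc ∑' i, μ (t i) = ∑' p : ι × L, μ ((p.2 +ᵥ t p.1) ∩ F) := by
        rw [ENNReal.tsum_prod']
        exact tsum_congr fun i => fund.measure_eq_tsum (t i)
    _ = μ (⋃ p : ι × L, (p.2 +ᵥ t p.1) ∩ F) :=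
        (measure_iUnion₀ (Pairwise.mono h fun _ _ hpq =>
          (hpq.mono inf_le_left inf_le_left).aedisjoint)
          fun p => ((ht p.1).vadd p.2).inter fund.nullMeasurableSet).symm
    _ ≤ μ F := measure_mono (iUnion_subset fun _ => inter_subset_right)

theorem AddSubgroup.dist_add_lt_of_not_disjoint_vadd_ball {E : Type*} [SeminormedAddCommGroup E]
    {Λ : AddSubgroup E} {γ₁ γ₂ : Λ} {x y : E} {r s : ℝ}
    (h : ¬Disjoint (γ₁ +ᵥ ball x r) (γ₂ +ᵥ ball y s)) :
    dist ((γ₁ : E) + x) (γ₂ + y) < r + s := by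
  obtain ⟨z, ⟨u, hu, rfl⟩, v, hv, hvu⟩ := not_disjoint_iff.mp h
  simp only [AddSubgroup.vadd_def, vadd_eq_add] at hvu ⊢
  calc dist ((γ₁ : E) + x) (γ₂ + y)
        ≤ dist ((γ₁ : E) + x) (γ₁ + u) + dist ((γ₂ : E) + v) (γ₂ + y) := by
          rw [hvu]; exact dist_triangle _ _ _
    _ < r + s := by
        rw [dist_add_left, dist_add_left, dist_comm x]
        exact add_lt_add hu hv

theorem exists_eq_intCast_of_mem_span_basisFun {ι : Type*} [Finite ι] {x : ι → ℝ}
    (hx : x ∈ span ℤ (range (Pi.basisFun ℝ ι))) : ∃ q : ι → ℤ, x = fun i => (q i : ℝ) := by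
  choose q hq using ((Pi.basisFun ℝ ι).mem_span_iff_repr_mem ℤ x).mp hx
  exact ⟨q, funext fun i => by simpa using (hq i).symm⟩

theorem ZSpan.volume_fundamentalDomain_pi_basisFun {ι : Type*} [Fintype ι] :
    volume (ZSpan.fundamentalDomain (Pi.basisFun ℝ ι)) = 1 := by
  simp [ZSpan.fundamentalDomain_pi_basisFun, volume_pi_pi]

theorem intCast_add_div_mem_latticeLmd {m d : ℕ} (hd : 0 < d) (q : Fin m → ℤ) (j : ℤ) :
    (fun i => (q i : ℝ) + j / d) ∈ latticeLmd m d := by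
  have hd' : (0 : ℤ) < d := by exact_mod_cast hd
  have h₀ := Int.emod_nonneg j hd'.ne'
  have h₁ := Int.emod_lt_of_pos j hd'
  refine ⟨fun i => q i + j / d, (j % d).toNat, by omega, fun i => ?_⟩
  have hj : (j : ℝ) = (j % d : ℤ) + d * (j / d : ℤ) := by
    exact_mod_cast (Int.emod_add_mul_ediv j d).symm
  have hk : (((j % d).toNat : ℕ) : ℝ) = (j % d : ℤ) := by exact_mod_cast Int.toNat_of_nonneg h₀
  rw [hj, hk]
  push_cast
  field_simp
  ring

theorem eq_zero_of_abs_intCast_add_div_lt {d : ℕ} {q j : ℤ} (hj : |j| < d)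
    (h : |(q : ℝ) + j / d| < 1 / d) : q = 0 ∧ j = 0 := by
  have hd : 0 < d := by exact_mod_cast (abs_nonneg j).trans_lt hj
  have hsum : d * q + j = 0 := by
    rw [← Int.abs_lt_one_iff, ← Int.cast_lt (R := ℝ)]
    push_cast
    rwa [show (d : ℝ) * q + j = d * (q + j / d) by field_simp, abs_mul, abs_of_pos (by positivity),
      ← lt_div_iff₀' (by positivity)]
  have hj₀ : j = 0 := Int.eq_zero_of_abs_lt_dvd ⟨-q, by linarith⟩ hj
  subst hj₀
  simpa [hd.ne'] using hsum

theorem exists_mem_latticeLmd_of_dist_lt {m d : ℕ} (hd : 0 < d) (a : Fin m → ℝ) {ε : ℝ}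
    (hε : 0 < ε) {n₁ n₂ k₁ k₂ : ℕ} {q₁ q₂ : Fin m → ℤ} (hn : n₁ ≤ n₂)
    (h : dist (fun i => (q₁ i : ℝ) + (n₁ * a i + k₁ / d))
      (fun i => (q₂ i : ℝ) + (n₂ * a i + k₂ / d)) < ε) :
    ∃ p ∈ latticeLmd m d, ∀ i, |((n₂ - n₁ : ℕ) : ℝ) * a i - p i| < ε := by
  refine ⟨_, intCast_add_div_mem_latticeLmd hd (q₁ - q₂) (k₁ - k₂), fun i => ?_⟩
  have hi := (dist_pi_lt_iff hε).mp h i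
  rw [Real.dist_eq, ← abs_neg] at hi
  convert hi using 2
  push_cast [Nat.cast_sub hn, Pi.sub_apply]
  ring

theorem eq_of_dist_lt_one_div {m d : ℕ} (hm : 0 < m) (a : Fin m → ℝ) {n k₁ k₂ : ℕ} (hk₁ : k₁ < d)
    (hk₂ : k₂ < d) {q₁ q₂ : Fin m → ℤ}
    (h : dist (fun i => (q₁ i : ℝ) + (n * a i + k₁ / d))
      (fun i => (q₂ i : ℝ) + (n * a i + k₂ / d)) < 1 / d) :
    q₁ = q₂ ∧ k₁ = k₂ := by
  have hk : |(k₁ - k₂ : ℤ)| < d := by rw [abs_lt]; omega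
  have hcoord (i : Fin m) : q₁ i - q₂ i = 0 ∧ (k₁ - k₂ : ℤ) = 0 := by
    refine eq_zero_of_abs_intCast_add_div_lt hk ?_
    have hi := (dist_pi_lt_iff (h.trans_le' dist_nonneg)).mp h i
    rw [Real.dist_eq] at hi
    convert hi using 2
    push_cast
    ring
  exact ⟨funext fun i => sub_eq_zero.mp (hcoord i).1, by have := (hcoord ⟨0, hm⟩).2; omega⟩

theorem one_lt_natCeil_one_div_add_one_mul {x : ℝ} (hx : 0 < x) : 1 < (⌈1 / x⌉₊ + 1) * x :=
  (div_lt_iff₀ hx).mp ((Nat.le_ceil _).trans_lt (lt_add_one _))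

theorem one_lt_tsum_volume_ball {m d : ℕ} (hd : 0 < d) {ε : ℝ} (hε : 0 < ε)
    (c : Fin (⌈1 / (d * ε ^ m)⌉₊ + 1) × Fin d → Fin m → ℝ) :
    1 < ∑' p, volume (ball (c p) (ε / 2)) := by
  simp only [tsum_fintype, Real.volume_pi_ball _ (half_pos hε), Finset.sum_const,
    Finset.card_univ, Fintype.card_prod, Fintype.card_fin, nsmul_eq_mul,
    mul_div_cancel₀ ε two_ne_zero]
  rw [← ENNReal.ofReal_natCast, ← ENNReal.ofReal_mul (by positivity), ← ENNReal.ofReal_one,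
    ENNReal.ofReal_lt_ofReal_iff (by positivity)]
  convert one_lt_natCeil_one_div_add_one_mul (x := d * ε ^ m)
    (mul_pos (by exact_mod_cast hd) (pow_pos hε m)) using 1
  push_cast
  ring

/-- Modified Dirichlet theorem for the lattice `L_{m,d}`: for any `a ∈ ℝ^m` and
`0 < ε < 1/(2d)` there are `1 ≤ n ≤ ⌈1/(d ε^m)⌉` and `p ∈ L_{m,d}` with
`|n·aᵢ − pᵢ| < ε` for all `i`. -/
theorem dirichlet_lattice (m d : ℕ) (hm : 1 ≤ m) (hd : 1 ≤ d)
    (a : Fin m → ℝ) (ε : ℝ) (hε : 0 < ε) (hε' : ε < 1 / (2 * d)) :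
    ∃ n : ℕ, 1 ≤ n ∧ (n : ℝ) ≤ ⌈1 / (d * ε ^ m)⌉₊ ∧
      ∃ p ∈ latticeLmd m d, ∀ i, |(n : ℝ) * a i - p i| < ε := by
  set N := ⌈1 / (d * ε ^ m)⌉₊
  let Λ := (span ℤ (range (Pi.basisFun ℝ (Fin m)))).toAddSubgroup
  -- Mathlib finds `Countable` for the submodule only
  have : Countable Λ := inferInstanceAs (Countable (span ℤ (range (Pi.basisFun ℝ (Fin m)))))
  let c (p : Fin (N + 1) × Fin d) : Fin m → ℝ := fun i => (p.1 : ℕ) * a i + (p.2 : ℕ) / d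
  have hvol : volume (ZSpan.fundamentalDomain (Pi.basisFun ℝ (Fin m))) <
      ∑' p, volume (ball (c p) (ε / 2)) := by
    rw [ZSpan.volume_fundamentalDomain_pi_basisFun]
    exact one_lt_tsum_volume_ball hd hε c
  obtain ⟨⟨⟨n₁, k₁⟩, γ₁⟩, ⟨⟨n₂, k₂⟩, γ₂⟩, hne, hmeet⟩ :=
    (ZSpan.isAddFundamentalDomain' (Pi.basisFun ℝ (Fin m)) volume
      ).exists_ne_not_disjoint_vadd_of_measure_lt_tsum
        (fun _ => measurableSet_ball.nullMeasurableSet) hvol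
  have hclose := AddSubgroup.dist_add_lt_of_not_disjoint_vadd_ball hmeet
  rw [add_halves] at hclose
  obtain ⟨q₁, hq₁⟩ := exists_eq_intCast_of_mem_span_basisFun γ₁.2
  obtain ⟨q₂, hq₂⟩ := exists_eq_intCast_of_mem_span_basisFun γ₂.2
  rw [hq₁, hq₂] at hclose
  rcases lt_trichotomy (n₁ : ℕ) n₂ with hlt | heq | hgt
  · obtain ⟨p, hp, hpa⟩ := exists_mem_latticeLmd_of_dist_lt hd a hε hlt.le hclose
    exact ⟨n₂ - n₁, by omega, by exact_mod_cast (by omega : (n₂ : ℕ) - n₁ ≤ N), p, hp, hpa⟩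
  · obtain rfl := Fin.ext heq
    have hεd : ε < 1 / d := hε'.trans_le (one_div_le_one_div_of_le (by positivity) (by linarith))
    obtain ⟨rfl, hk⟩ := eq_of_dist_lt_one_div hm a k₁.2 k₂.2 (hclose.trans hεd)
    exact absurd (by rw [Fin.ext hk, Subtype.ext (hq₁.trans hq₂.symm)]) hne
  · rw [dist_comm] at hclose
    obtain ⟨p, hp, hpa⟩ := exists_mem_latticeLmd_of_dist_lt hd a hε hgt.le hclose
    exact ⟨n₁ - n₂, by omega, by exact_mod_cast (by omega : (n₁ : ℕ) - n₂ ≤ N), p, hp, hpa⟩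
end

section
/- For every rotation O ∈ SO(3) with rotation angle φ ∈ [0, 2π), there exists an integer n with 1 ≤ n ≤ 12 such that the rotation angle ψ of Oⁿ (i.e., ψ = nφ mod 2π) satisfies |sin(ψ/2)| < 1/4. Moreover 12 is optimal: for φ = 2·arcsin(1/4), no n with 1 ≤ n ≤ 11 works. -/
open Real

/-- `|sin y|` is bounded by the distance from `y` to the nearest multiple of `π`. -/
lemma abs_sin_le_norm_addCircle (y : ℝ) : |Real.sin y| ≤ ‖(y : AddCircle π)‖ := by
  rw [AddCircle.norm_eq]
  set k : ℤ := round (π⁻¹ * y) with hk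
  have h : Real.sin y = (-1) ^ k * Real.sin (y - k * π) := by
    have := Real.sin_add_int_mul_pi (y - k * π) k
    rw [sub_add_cancel] at this
    exact this
  have h1 : |((-1:ℝ)) ^ k| = 1 := by
    rcases k.even_or_odd with he | he
    · rw [he.neg_one_zpow]; simp
    · rw [he.neg_one_zpow]; simp
  rw [h, abs_mul, h1, one_mul]
  exact Real.abs_sin_le_abs

/-- On `[α, π - α]` with `0 ≤ α ≤ π/2`, `sin` is at least `sin α`. -/
lemma sin_ge_of_mem {α x : ℝ} (hα0 : 0 ≤ α) (hα : α ≤ π / 2)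
    (h1 : α ≤ x) (h2 : x ≤ π - α) : Real.sin α ≤ Real.sin x := by
  rcases le_or_gt x (π / 2) with hx | hx
  · exact Real.sin_le_sin_of_le_of_le_pi_div_two (by linarith) hx h1
  · rw [← Real.sin_pi_sub x]
    exact Real.sin_le_sin_of_le_of_le_pi_div_two (by linarith) (by linarith) (by linarith)

lemma arcsin_quarter_lt : Real.arcsin (1 / 4) < π / 12 := by
  have hpi : (0:ℝ) < π := Real.pi_pos
  rw [Real.arcsin_lt_iff_lt_sin' ⟨by linarith, by linarith⟩]
  have h12 : π / 12 = π / 3 - π / 4 := by ring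
  rw [h12, Real.sin_sub, Real.sin_pi_div_three, Real.cos_pi_div_four,
    Real.cos_pi_div_three, Real.sin_pi_div_four]
  have h2 : Real.sqrt 2 ^ 2 = 2 := Real.sq_sqrt (by norm_num)
  have h3 : Real.sqrt 3 ^ 2 = 3 := Real.sq_sqrt (by norm_num)
  have h2' : (1.41:ℝ) ≤ Real.sqrt 2 := by nlinarith [Real.sqrt_nonneg 2]
  have h2'' : Real.sqrt 2 ≤ 1.42 := by nlinarith [Real.sqrt_nonneg 2]
  have h3' : (1.73:ℝ) ≤ Real.sqrt 3 := by nlinarith [Real.sqrt_nonneg 3]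
  nlinarith

/-- For every rotation angle `φ ∈ [0, 2π)` of an element of `SO(3)` there is
`1 ≤ n ≤ 12` such that the rotation angle of the `n`-th power satisfies
`|sin(nφ/2)| < 1/4` (equivalently `Oⁿ` is within Frobenius distance `1/√2` of
`I`); moreover `12` is optimal: for `φ = 2·arcsin(1/4)` no `1 ≤ n ≤ 11` works. -/
theorem so3_power_in_ball :
    (∀ φ : ℝ, 0 ≤ φ → φ < 2 * π →
      ∃ n : ℕ, 1 ≤ n ∧ n ≤ 12 ∧ |Real.sin ((n : ℝ) * φ / 2)| < 1 / 4) ∧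
    (∀ n : ℕ, 1 ≤ n → n ≤ 11 →
      ¬ |Real.sin ((n : ℝ) * (2 * Real.arcsin (1 / 4)) / 2)| < 1 / 4) := by
  have hpi : (0:ℝ) < π := Real.pi_pos
  constructor
  · intro φ _ _
    haveI : Fact (0 < π) := ⟨hpi⟩
    obtain ⟨j, hj, hje⟩ := AddCircle.exists_norm_nsmul_le (T := π)
      ((φ / 2 : ℝ) : AddCircle π) (n := 12) (by norm_num)
    obtain ⟨hj1, hj2⟩ := hj
    refine ⟨j, hj1, hj2, ?_⟩
    have hsmul : j • ((φ / 2 : ℝ) : AddCircle π)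
        = (((j : ℝ) * φ / 2 : ℝ) : AddCircle π) := by
      rw [← AddCircle.coe_nsmul]
      norm_num [nsmul_eq_mul, mul_div_assoc]
    calc |Real.sin ((j : ℝ) * φ / 2)| ≤ ‖(((j : ℝ) * φ / 2 : ℝ) : AddCircle π)‖ :=
          abs_sin_le_norm_addCircle _
      _ ≤ π / (12 + 1) := by rw [← hsmul]; exact_mod_cast hje
      _ < 1 / 4 := by
          have := Real.pi_lt_d2
          norm_num
          linarith
  · intro n hn1 hn2
    set α := Real.arcsin (1 / 4) with hα
    have hα0 : 0 ≤ α := Real.arcsin_nonneg.mpr (by norm_num)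
    have hα12 : α < π / 12 := arcsin_quarter_lt
    have hsinα : Real.sin α = 1 / 4 := Real.sin_arcsin (by norm_num) (by norm_num)
    have heq : (n : ℝ) * (2 * α) / 2 = (n : ℝ) * α := by ring
    rw [heq, not_lt]
    have hge : Real.sin α ≤ Real.sin ((n : ℝ) * α) := by
      apply sin_ge_of_mem hα0 (by linarith)
      · nlinarith [(by exact_mod_cast hn1 : (1:ℝ) ≤ (n:ℝ))]
      · have h11 : (n : ℝ) ≤ 11 := by exact_mod_cast hn2
        nlinarith
    have hnonneg : 0 ≤ Real.sin ((n : ℝ) * α) := by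
      rw [hsinα] at hge; linarith
    rw [abs_of_nonneg hnonneg, ← hsinα]
    exact hge
end

section
/- For every U ∈ SU(2) with spectral angle φ ∈ [0, 2π) (spectrum {e^{iφ}, e^{−iφ}}), there exists an integer n with 1 ≤ n ≤ 6 such that either |sin(nφ/2)| < 1/4 or |cos(nφ/2)| < 1/4 (equivalently Uⁿ is within Frobenius distance 1/√2 of I or of −I). Moreover 6 is optimal. -/
open Real


lemma key_lemma (x : ℝ) (k : ℤ) (h : |x - k * (π/2)| < Real.arcsin (1/4)) :
    |Real.sin x| < 1/4 ∨ |Real.cos x| < 1/4 := by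
  set α := Real.arcsin (1/4) with hαdef
  have hs : Real.sin α = 1/4 := Real.sin_arcsin (by norm_num) (by norm_num)
  have hα2 : α ≤ π/2 := Real.arcsin_le_pi_div_two _
  have hpi : (0:ℝ) < π := Real.pi_pos
  set t := x - k * (π/2) with ht
  have htpi : |t| ≤ π := le_trans h.le (by linarith)
  have hst : |Real.sin t| < 1/4 := by
    have h1 : Real.sin |t| < Real.sin α := by
      apply Real.sin_lt_sin_of_lt_of_le_pi_div_two _ hα2 h
      have := abs_nonneg t; linarith
    have habs : |Real.sin t| = Real.sin |t| := by
      rcases le_or_gt 0 t with h0 | h0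
      · rw [abs_of_nonneg h0, abs_of_nonneg
          (Real.sin_nonneg_of_nonneg_of_le_pi h0 (by rw [abs_of_nonneg h0] at htpi; exact htpi))]
      · have hsn : Real.sin t ≤ 0 := by
          have h2 : 0 ≤ Real.sin (-t) := Real.sin_nonneg_of_nonneg_of_le_pi (by linarith)
            (by rw [abs_of_neg h0] at htpi; linarith)
          rw [Real.sin_neg] at h2; linarith
        rw [abs_of_neg h0, abs_of_nonpos hsn, Real.sin_neg]
    rw [habs]; linarith
  have hx : x = t + k * (π/2) := by ring
  have hone : ∀ m : ℤ, |((-1:ℝ)) ^ m| = 1 := by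
    intro m
    rcases m.even_or_odd with he | ho
    · rw [he.neg_one_zpow, abs_one]
    · rw [ho.neg_one_zpow, abs_neg, abs_one]
  rcases Int.even_or_odd k with ⟨m, hm⟩ | ⟨m, hm⟩
  · left
    have hxx : x = t + m * π := by rw [hx, hm]; push_cast; ring
    rw [hxx, Real.sin_add_int_mul_pi, abs_mul, hone, one_mul]
    exact hst
  · right
    have hxx : x = (t + π/2) + m * π := by rw [hx, hm]; push_cast; ring
    rw [hxx, Real.cos_add_int_mul_pi, abs_mul, hone, one_mul,
      Real.cos_add_pi_div_two, abs_neg]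
    exact hst

lemma cover_lemma (θ : ℝ) (h0 : 0 ≤ θ) (h1 : θ ≤ π/2) :
    ∃ n : ℕ, 1 ≤ n ∧ n ≤ 6 ∧ ∃ k : ℤ, |(n:ℝ) * θ - k * (π/2)| < Real.arcsin (1/4) := by
  set α := Real.arcsin (1/4) with hαdef
  set β := π/2 with hβdef
  have hα1 : 1/4 < α := by
    have := Real.sin_lt (show (0:ℝ) < α from (Real.arcsin_pos).mpr (by norm_num))
    rw [Real.sin_arcsin (by norm_num) (by norm_num)] at this; exact this
  have hβ : β < 7/4 := by
    have := Real.pi_lt_d2; rw [hβdef]; linarith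
  rcases lt_or_ge θ α with h | h
  · exact ⟨1, le_refl _, by norm_num, 0, by push_cast; rw [abs_lt]; constructor <;> linarith⟩
  rcases lt_or_ge θ ((β+α)/6) with h' | h
  · exact ⟨6, by norm_num, by norm_num, 1, by push_cast; rw [abs_lt]; constructor <;> linarith⟩
  rcases lt_or_ge θ ((β+α)/5) with h' | h
  · exact ⟨5, by norm_num, by norm_num, 1, by push_cast; rw [abs_lt]; constructor <;> linarith⟩
  rcases lt_or_ge θ ((β+α)/4) with h' | h
  · exact ⟨4, by norm_num, by norm_num, 1, by push_cast; rw [abs_lt]; constructor <;> linarith⟩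
  rcases lt_or_ge θ ((β+α)/3) with h' | h
  · exact ⟨3, by norm_num, by norm_num, 1, by push_cast; rw [abs_lt]; constructor <;> linarith⟩
  rcases lt_or_ge θ ((2*β+α)/5) with h' | h
  · exact ⟨5, by norm_num, by norm_num, 2, by push_cast; rw [abs_lt]; constructor <;> linarith⟩
  rcases lt_or_ge θ ((β+α)/2) with h' | h
  · exact ⟨2, by norm_num, by norm_num, 1, by push_cast; rw [abs_lt]; constructor <;> linarith⟩
  rcases lt_or_ge θ ((3*β+α)/5) with h' | h
  · exact ⟨5, by norm_num, by norm_num, 3, by push_cast; rw [abs_lt]; constructor <;> linarith⟩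
  rcases lt_or_ge θ ((2*β+α)/3) with h' | h
  · exact ⟨3, by norm_num, by norm_num, 2, by push_cast; rw [abs_lt]; constructor <;> linarith⟩
  rcases lt_or_ge θ ((3*β+α)/4) with h' | h
  · exact ⟨4, by norm_num, by norm_num, 3, by push_cast; rw [abs_lt]; constructor <;> linarith⟩
  rcases lt_or_ge θ ((4*β+α)/5) with h' | h
  · exact ⟨5, by norm_num, by norm_num, 4, by push_cast; rw [abs_lt]; constructor <;> linarith⟩
  rcases lt_or_ge θ ((5*β+α)/6) with h' | h
  · exact ⟨6, by norm_num, by norm_num, 5, by push_cast; rw [abs_lt]; constructor <;> linarith⟩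
  · exact ⟨1, le_refl _, by norm_num, 1, by push_cast; rw [abs_lt]; constructor <;> linarith⟩

set_option maxHeartbeats 1000000 in
/-- For every `U ∈ SU(2)` with spectral angle `φ ∈ [0, 2π)` there is `1 ≤ n ≤ 6`
with `|sin(nφ/2)| < 1/4` or `|cos(nφ/2)| < 1/4` (i.e. `Uⁿ` is within Frobenius
distance `1/√2` of `I` or of `−I`); moreover `6` is optimal: for
`φ = 2·arcsin(1/4)` no `1 ≤ n ≤ 5` works. -/
theorem su2_power_in_ball :
    (∀ φ : ℝ, 0 ≤ φ → φ < 2 * π →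
      ∃ n : ℕ, 1 ≤ n ∧ n ≤ 6 ∧
        (|Real.sin ((n : ℝ) * φ / 2)| < 1 / 4 ∨
         |Real.cos ((n : ℝ) * φ / 2)| < 1 / 4)) ∧
    (∀ n : ℕ, 1 ≤ n → n ≤ 5 →
      ¬ (|Real.sin ((n : ℝ) * (2 * Real.arcsin (1 / 4)) / 2)| < 1 / 4 ∨
         |Real.cos ((n : ℝ) * (2 * Real.arcsin (1 / 4)) / 2)| < 1 / 4)) := by
  constructor
  · intro φ h0 h2
    have hpi : (0:ℝ) < π := Real.pi_pos
    rcases le_or_gt φ π with hle | hgt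
    · obtain ⟨n, hn1, hn6, k, hk⟩ := cover_lemma (φ/2) (by linarith) (by linarith)
      refine ⟨n, hn1, hn6, key_lemma _ k ?_⟩
      rw [show (n:ℝ) * φ / 2 = (n:ℝ) * (φ/2) by ring]
      exact hk
    · obtain ⟨n, hn1, hn6, k, hk⟩ := cover_lemma (π - φ/2) (by linarith) (by linarith)
      refine ⟨n, hn1, hn6, key_lemma _ (2*n - k) ?_⟩
      have heq : ((2*(n:ℤ) - k : ℤ) : ℝ) = 2*(n:ℝ) - (k:ℝ) := by push_cast; ring
      rw [heq, show (n:ℝ) * φ / 2 - (2*(n:ℝ) - (k:ℝ)) * (π/2)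
          = -((n:ℝ) * (π - φ/2) - k * (π/2)) by ring, abs_neg]
      exact hk
  · intro n h1 h5
    set α := Real.arcsin (1/4) with hαdef
    have hs : Real.sin α = 1/4 := Real.sin_arcsin (by norm_num) (by norm_num)
    have hsq : (Real.sqrt 15 / 4 : ℝ)^2 = 15/16 := by
      rw [div_pow, Real.sq_sqrt] <;> norm_num
    have hc : Real.cos α = Real.sqrt 15 / 4 := by
      rw [hαdef, Real.cos_arcsin, show (1:ℝ) - (1/4)^2 = (Real.sqrt 15 / 4)^2 by rw [hsq]; norm_num]
      exact Real.sqrt_sq (by positivity)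
    have h15 : Real.sqrt 15 ^ 2 = 15 := Real.sq_sqrt (by norm_num)
    have h15a : 3 < Real.sqrt 15 := by nlinarith [Real.sqrt_nonneg 15]
    have h15b : Real.sqrt 15 < 4 := by nlinarith [Real.sqrt_nonneg 15]
    have h153 : Real.sqrt 15 ^ 3 = 15 * Real.sqrt 15 := by
      rw [pow_succ, h15]
    have h154 : Real.sqrt 15 ^ 4 = 225 := by
      rw [show (4:ℕ) = 2 + 2 from rfl, pow_add, h15]; norm_num
    have h155 : Real.sqrt 15 ^ 5 = 225 * Real.sqrt 15 := by
      rw [pow_succ, h154]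
    push_neg
    interval_cases n
    · rw [show ((1:ℕ):ℝ) * (2*α)/2 = α by push_cast; ring]
      constructor
      · rw [hs]; rw [abs_of_nonneg (by norm_num)]
      · rw [hc]; rw [abs_of_nonneg (by positivity)]; nlinarith
    · rw [show ((2:ℕ):ℝ) * (2*α)/2 = α + α by push_cast; ring]
      simp only [Real.sin_add, Real.cos_add, hs, hc]
      constructor
      · rw [abs_of_nonneg (by nlinarith [h153, h154, h155])]; nlinarith [h153, h154, h155]
      · rw [abs_of_nonneg (by nlinarith [h153, h154, h155])]; nlinarith [h153, h154, h155]
    · rw [show ((3:ℕ):ℝ) * (2*α)/2 = α + α + α by push_cast; ring]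
      simp only [Real.sin_add, Real.cos_add, hs, hc]
      constructor
      · rw [abs_of_nonneg (by nlinarith [h153, h154, h155])]; nlinarith [h153, h154, h155]
      · rw [abs_of_nonneg (by nlinarith [h153, h154, h155])]; nlinarith [h153, h154, h155]
    · rw [show ((4:ℕ):ℝ) * (2*α)/2 = α + α + α + α by push_cast; ring]
      simp only [Real.sin_add, Real.cos_add, hs, hc]
      constructor
      · rw [abs_of_nonneg (by nlinarith [h153, h154, h155])]; nlinarith [h153, h154, h155]
      · rw [abs_of_nonneg (by nlinarith [h153, h154, h155])]; nlinarith [h153, h154, h155]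
    · rw [show ((5:ℕ):ℝ) * (2*α)/2 = α + α + α + α + α by push_cast; ring]
      simp only [Real.sin_add, Real.cos_add, hs, hc]
      constructor
      · rw [abs_of_nonneg (by nlinarith [h153, h154, h155])]; nlinarith [h153, h154, h155]
      · rw [abs_of_nonneg (by nlinarith [h153, h154, h155])]; nlinarith [h153, h154, h155]
end

section
/- Let φ ∈ (0, 2π) with φ ≠ π, and let B₂₃ = O(φ, e⃗ₓ), B₁₃ = O(φ, e⃗_y), B₁₂ = O(φ, e⃗_z) be the rotations by angle φ about the three coordinate axes in SO(3). Then any 3×3 real matrix commuting with all three of B₁₂, B₁₃, B₂₃ is a scalar multiple of the identity. For φ = π the commutant is strictly larger (it contains all diagonal matrices). -/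
open Real

namespace SO3rot

/-- Rotation by angle `φ` about the `x`-axis. -/
noncomputable def Rx (φ : ℝ) : Matrix (Fin 3) (Fin 3) ℝ :=
  !![1, 0, 0; 0, Real.cos φ, -Real.sin φ; 0, Real.sin φ, Real.cos φ]

/-- Rotation by angle `φ` about the `y`-axis. -/
noncomputable def Ry (φ : ℝ) : Matrix (Fin 3) (Fin 3) ℝ :=
  !![Real.cos φ, 0, Real.sin φ; 0, 1, 0; -Real.sin φ, 0, Real.cos φ]

/-- Rotation by angle `φ` about the `z`-axis. -/
noncomputable def Rz (φ : ℝ) : Matrix (Fin 3) (Fin 3) ℝ :=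
  !![Real.cos φ, -Real.sin φ, 0; Real.sin φ, Real.cos φ, 0; 0, 0, 1]

/-- If `(a,b)` is fixed by a rotation of the plane with `sin ≠ 0`, then it is zero. -/
lemma pair_zero (c s a b : ℝ) (hs : s ≠ 0)
    (h1 : a = c * a - s * b) (h2 : b = s * a + c * b) : a = 0 ∧ b = 0 := by
  have hs2 : (0:ℝ) < s ^ 2 := by positivity
  have hb : ((1 - c) ^ 2 + s ^ 2) * b = 0 := by linear_combination s * h1 + (1 - c) * h2
  have hpos : (0:ℝ) < (1 - c) ^ 2 + s ^ 2 := by nlinarith [sq_nonneg (1 - c)]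
  have hb0 : b = 0 := (mul_eq_zero.mp hb).resolve_left (ne_of_gt hpos)
  have ha : s * a = 0 := by rw [hb0] at h2; linarith
  exact ⟨(mul_eq_zero.mp ha).resolve_left hs, hb0⟩

/-- For `φ ∈ (0,2π)` with `φ ≠ π`, any real `3×3` matrix commuting with the
rotations by `φ` about the three coordinate axes is a scalar multiple of the
identity; for `φ = π` the commutant is strictly larger, containing all diagonal
matrices. -/
theorem commutant_of_coordinate_rotations (φ : ℝ)
    (hφ₀ : 0 < φ) (hφ₂ : φ < 2 * π) (hφπ : φ ≠ π) :
    (∀ L : Matrix (Fin 3) (Fin 3) ℝ,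
      L * Rx φ = Rx φ * L → L * Ry φ = Ry φ * L → L * Rz φ = Rz φ * L →
        ∃ c : ℝ, L = c • (1 : Matrix (Fin 3) (Fin 3) ℝ)) ∧
    (∀ L : Matrix (Fin 3) (Fin 3) ℝ, L.IsDiag →
      L * Rx π = Rx π * L ∧ L * Ry π = Ry π * L ∧ L * Rz π = Rz π * L) := by
  have hs : Real.sin φ ≠ 0 := by
    rcases lt_or_gt_of_ne hφπ with h | h
    · exact ne_of_gt (Real.sin_pos_of_pos_of_lt_pi hφ₀ h)
    · have h1 : Real.sin (φ - π) > 0 :=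
        Real.sin_pos_of_pos_of_lt_pi (by linarith) (by linarith)
      rw [Real.sin_sub_pi] at h1
      linarith
  constructor
  · intro L h1 _ h3
    have H1 := fun i j => congrFun (congrFun h1 i) j
    have H3 := fun i j => congrFun (congrFun h3 i) j
    simp only [Rx, Rz, Matrix.mul_apply, Fin.sum_univ_three] at H1 H3
    have e01 := H1 0 1; have e02 := H1 0 2
    have e10 := H1 1 0; have e20 := H1 2 0
    have e12 := H1 1 2
    have z02 := H3 0 2; have z12 := H3 1 2
    have z20 := H3 2 0; have z21 := H3 2 1
    have z01 := H3 0 1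
    simp [Matrix.vecHead, Matrix.vecTail] at e01 e02 e10 e20 e12 z02 z12 z20 z21 z01
    obtain ⟨p1, p2⟩ := pair_zero (Real.cos φ) (Real.sin φ) (L 0 1) (-(L 0 2)) hs
      (by linarith) (by linarith)
    have h02 : L 0 2 = 0 := by linarith
    obtain ⟨q1, q2⟩ := pair_zero (Real.cos φ) (Real.sin φ) (L 1 0) (L 2 0) hs
      (by linarith) (by linarith)
    obtain ⟨r1, r2⟩ := pair_zero (Real.cos φ) (Real.sin φ) (L 0 2) (L 1 2) hs
      (by linarith) (by linarith)
    obtain ⟨t1, t2⟩ := pair_zero (Real.cos φ) (Real.sin φ) (L 2 0) (-(L 2 1)) hs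
      (by linarith) (by linarith)
    have h21 : L 2 1 = 0 := by linarith
    have d1 : L 1 1 = L 2 2 := by
      have h : Real.sin φ * L 1 1 = Real.sin φ * L 2 2 := by linarith
      exact mul_left_cancel₀ hs h
    have d2 : L 0 0 = L 1 1 := by
      have h : Real.sin φ * L 1 1 = Real.sin φ * L 0 0 := by linarith
      exact (mul_left_cancel₀ hs h).symm
    refine ⟨L 0 0, ?_⟩
    ext i j
    fin_cases i <;> fin_cases j <;> simp [Matrix.one_apply] <;> linarith
  · intro L hd
    have h01 : L 0 1 = 0 := hd (by decide)
    have h02 : L 0 2 = 0 := hd (by decide)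
    have h10 : L 1 0 = 0 := hd (by decide)
    have h12 : L 1 2 = 0 := hd (by decide)
    have h20 : L 2 0 = 0 := hd (by decide)
    have h21 : L 2 1 = 0 := hd (by decide)
    refine ⟨?_, ?_, ?_⟩ <;> ext i j <;> fin_cases i <;> fin_cases j <;>
      simp [Rx, Ry, Rz, Matrix.mul_apply, Fin.sum_univ_three, Real.cos_pi, Real.sin_pi,
        h01, h02, h10, h12, h20, h21, Matrix.vecHead, Matrix.vecTail]

end SO3rot
end
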